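/- Let (Ω, F, P) be a probability space, let σ : ℝ → ℝ be the logistic function, fix θ ∈ ℝᵈ, c ≥ 0, and a sequence of random vectors θ̂ₙ : Ω → ℝᵈ converging to θ in probability. Suppose for each n we have real-valued random variables Êₙ and Eₙ together with a nonempty finite index set Sₙ with parameters ‖αᵢ‖₂ ≤ c and βᵢ ∈ ℝ, such that almost surely |Êₙ − Eₙ| ≤ (1/|Sₙ|) · Σ_{i ∈ Sₙ} |σ(⟪θ̂ₙ, αᵢ⟫ − βᵢ) − σ(⟪θ, αᵢ⟫ − βᵢ)|. Then |Êₙ − Eₙ| → 0 in probability as n → ∞. -/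

import Mathlib

open scoped RealInnerProductSpace
open MeasureTheory Filter

/-! The logistic function is `1/4`-Lipschitz, so each summand in the almost-sure bound is at most
`c/4 · ‖θ̂ₙ - θ‖`, and so is their average. Hence `|Êₙ - Eₙ|` is dominated almost surely by a
constant multiple of `‖θ̂ₙ - θ‖`, and convergence in probability passes to it. -/

namespace Real

lemma lipschitzWith_sigmoid : LipschitzWith 4⁻¹ sigmoid := by
  refine lipschitzWith_of_nnnorm_deriv_le differentiable_sigmoid fun x => ?_
  rw [← NNReal.coe_le_coe, coe_nnnorm, deriv_sigmoid, norm_eq_abs, NNReal.coe_inv,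
    NNReal.coe_ofNat, abs_of_nonneg (mul_nonneg (sigmoid_nonneg x) (by linarith [sigmoid_le_one x]))]
  nlinarith [sq_nonneg (sigmoid x - 2⁻¹)]

end Real

lemma LipschitzWith.comp_inner_sub_const {E : Type*} [NormedAddCommGroup E] [InnerProductSpace ℝ E]
    {f : ℝ → ℝ} {K : NNReal} (hf : LipschitzWith K f) (a : E) (b : ℝ) :
    LipschitzWith (K * ‖a‖₊) (fun x : E => f (⟪x, a⟫ - b)) := by
  refine LipschitzWith.of_dist_le_mul fun x y => ?_
  calc dist (f (⟪x, a⟫ - b)) (f (⟪y, a⟫ - b))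
      ≤ K * dist (⟪x, a⟫ - b) (⟪y, a⟫ - b) := hf.dist_le_mul _ _
    _ = K * |⟪x - y, a⟫| := by rw [Real.dist_eq, inner_sub_left, sub_sub_sub_cancel_right]
    _ ≤ K * (‖x - y‖ * ‖a‖) := by gcongr; exact abs_real_inner_le_norm _ _
    _ = ↑(K * ‖a‖₊) * dist x y := by push_cast; rw [dist_eq_norm]; ring

lemma MeasureTheory.TendstoInMeasure.of_dist_le_mul {α ι E F : Type*} [MeasurableSpace α]
    {μ : Measure α} {l : Filter ι} [PseudoMetricSpace E] [PseudoMetricSpace F]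
    {f : ι → α → E} {g : α → E} {f' : ι → α → F} {g' : α → F}
    (hf : TendstoInMeasure μ f l g) (C : ℝ)
    (h : ∀ i, ∀ᵐ x ∂μ, dist (f' i x) (g' x) ≤ C * dist (f i x) (g x)) :
    TendstoInMeasure μ f' l g' := by
  rw [tendstoInMeasure_iff_dist] at hf ⊢
  intro ε hε
  have hC : 0 < max C 1 := lt_max_of_lt_right one_pos
  refine tendsto_of_tendsto_of_tendsto_of_le_of_le tendsto_const_nhds
    (hf (ε / max C 1) (by positivity)) (fun _ => zero_le) (fun i => measure_mono_ae ?_)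
  filter_upwards [h i] with x hx hε_le
  have hCx : C * dist (f i x) (g x) ≤ max C 1 * dist (f i x) (g x) := by
    gcongr; exact le_max_left C 1
  change ε / max C 1 ≤ dist (f i x) (g x)
  rw [div_le_iff₀ hC, mul_comm]
  exact (show ε ≤ dist (f' i x) (g' x) from hε_le).trans (hx.trans hCx)

theorem pIRT_estimator_consistent_general
    {Ω : Type*} [MeasurableSpace Ω] (P : Measure Ω)
    (σ : ℝ → ℝ) (hσ : σ = fun t : ℝ => 1 / (1 + Real.exp (-t)))
    (d : ℕ) (θ : EuclideanSpace ℝ (Fin d)) (c : ℝ)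
    (θhat : ℕ → Ω → EuclideanSpace ℝ (Fin d))
    (hconv : TendstoInMeasure P θhat atTop (fun _ => θ))
    (Ehat E : ℕ → Ω → ℝ)
    {ι : Type*} (S : ℕ → Finset ι) (hS : ∀ n, (S n).Nonempty)
    (α : ℕ → ι → EuclideanSpace ℝ (Fin d)) (β : ℕ → ι → ℝ)
    (hα : ∀ n, ∀ i ∈ S n, ‖α n i‖ ≤ c)
    (hdom : ∀ n : ℕ, ∀ᵐ ω ∂P,
      |Ehat n ω - E n ω| ≤ (1 / ((S n).card : ℝ)) *
        ∑ i ∈ S n, |σ (⟪θhat n ω, α n i⟫ - β n i) - σ (⟪θ, α n i⟫ - β n i)|) :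
    TendstoInMeasure P (fun (n : ℕ) (ω : Ω) => |Ehat n ω - E n ω|)
      atTop (fun _ => (0 : ℝ)) := by
  have hσ_eq : σ = Real.sigmoid := by
    rw [hσ]; funext t; rw [Real.sigmoid_def, one_div]
  subst hσ_eq
  refine hconv.of_dist_le_mul (4⁻¹ * c) fun n => ?_
  filter_upwards [hdom n] with ω hω
  rw [one_div_mul_eq_div, ← Finset.expect_eq_sum_div_card] at hω
  rw [Real.dist_0_eq_abs, abs_abs]
  refine hω.trans (Finset.expect_le (hS n) fun i hi => ?_)
  calc |Real.sigmoid (⟪θhat n ω, α n i⟫ - β n i) - Real.sigmoid (⟪θ, α n i⟫ - β n i)|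
      ≤ 4⁻¹ * ‖α n i‖ * dist (θhat n ω) θ := by
        simpa [← Real.dist_eq] using
          (Real.lipschitzWith_sigmoid.comp_inner_sub_const (α n i) (β n i)).dist_le_mul
            (θhat n ω) θ
    _ ≤ 4⁻¹ * c * dist (θhat n ω) θ := by gcongr; exact hα n i hi

/-- If `θ̂ₙ → θ` in probability and, for each `n`, the random variables `Êₙ` and `Eₙ`
satisfy almost surely `|Êₙ − Eₙ| ≤ (1/|Sₙ|) Σ_{i∈Sₙ} |σ(⟪θ̂ₙ,αᵢ⟫−βᵢ) − σ(⟪θ,αᵢ⟫−βᵢ)|`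
for a nonempty finite index set `Sₙ` with `‖αᵢ‖ ≤ c`, then `|Êₙ − Eₙ| → 0` in
probability. -/
theorem pIRT_estimator_consistent
    {Ω : Type*} [MeasurableSpace Ω] (P : Measure Ω) [IsProbabilityMeasure P]
    (σ : ℝ → ℝ) (hσ : σ = fun t : ℝ => 1 / (1 + Real.exp (-t)))
    (d : ℕ) (θ : EuclideanSpace ℝ (Fin d)) (c : ℝ) (hc : 0 ≤ c)
    (θhat : ℕ → Ω → EuclideanSpace ℝ (Fin d))
    (hconv : TendstoInMeasure P θhat atTop (fun _ => θ))
    (Ehat E : ℕ → Ω → ℝ)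
    {ι : Type*} (S : ℕ → Finset ι) (hS : ∀ n, (S n).Nonempty)
    (α : ℕ → ι → EuclideanSpace ℝ (Fin d)) (β : ℕ → ι → ℝ)
    (hα : ∀ n, ∀ i ∈ S n, ‖α n i‖ ≤ c)
    (hdom : ∀ n : ℕ, ∀ᵐ ω ∂P,
      |Ehat n ω - E n ω| ≤ (1 / ((S n).card : ℝ)) *
        ∑ i ∈ S n, |σ (⟪θhat n ω, α n i⟫ - β n i) - σ (⟪θ, α n i⟫ - β n i)|) :
    TendstoInMeasure P (fun (n : ℕ) (ω : Ω) => |Ehat n ω - E n ω|)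
      atTop (fun _ => (0 : ℝ)) :=
  pIRT_estimator_consistent_general P σ hσ d θ c θhat hconv Ehat E S hS α β hα hdom
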